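/- For α ∈ [0,1], the eigenvalues of A_α(S_n) for the star S_n on n vertices are: λ_1 = (αn + √(α²n² + 4(n−1)(1−2α)))/2, λ_n = (αn − √(α²n² + 4(n−1)(1−2α)))/2, and λ_k = α for 2 ≤ k ≤ n−1. -/

import Mathlib

/-- The `A_α`-matrix of a graph: `α·D(G) + (1-α)·A(G)`. -/
noncomputable def Aalpha {n : ℕ} (α : ℝ) (G : SimpleGraph (Fin n)) [DecidableRel G.Adj] :
    Matrix (Fin n) (Fin n) ℝ :=
  α • Matrix.diagonal (fun v => (G.degree v : ℝ)) + (1 - α) • G.adjMatrix ℝ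

lemma Aalpha_isHermitian {n : ℕ} (α : ℝ) (G : SimpleGraph (Fin n)) [DecidableRel G.Adj] :
    (Aalpha α G).IsHermitian := by
  apply Matrix.IsHermitian.ext
  intro i j
  by_cases h : G.Adj i j <;> by_cases hij : i = j <;>
    simp_all [Aalpha, Matrix.diagonal_apply, SimpleGraph.adj_comm, eq_comm]

/-- The `k`-th largest eigenvalue (1-indexed) of a Hermitian matrix. -/
noncomputable def eigDesc {n : ℕ} {M : Matrix (Fin n) (Fin n) ℝ} (hM : M.IsHermitian)
    (k : ℕ) : ℝ :=
  ((Finset.univ.val.map hM.eigenvalues).sort (· ≤ ·)).getD (n - k) 0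

/-- The star `S_n` on `n` vertices, with center `0`. -/
def starGraph (n : ℕ) [NeZero n] : SimpleGraph (Fin n) where
  Adj u v := u ≠ v ∧ (u = 0 ∨ v = 0)
  symm := ⟨fun u v h => ⟨h.1.symm, h.2.symm⟩⟩
  loopless := ⟨fun v h => h.1 rfl⟩

instance (n : ℕ) [NeZero n] : DecidableRel (starGraph n).Adj := fun u v =>
  inferInstanceAs (Decidable (u ≠ v ∧ (u = 0 ∨ v = 0)))

/-! Listing the centre first, `x • 1 - A_α(S_n)` is an arrowhead matrix whose leaf block is
`(x - α) • 1`, so for `x ≠ α` the Schur complement gives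
`det (x • 1 - A_α(S_n)) = (x - α) ^ (n - 2) * ((x - α) * (x - α * (n - 1)) - (n - 1) * (1 - α) ^ 2)`.
The quadratic factor has roots `(α * n ± √Δ) / 2`, and
`Δ = (α * (n - 2)) ^ 2 + 4 * (n - 1) * (1 - α) ^ 2` shows that they enclose `α`,
which fixes their places in the sorted spectrum. -/

open Matrix Polynomial

theorem Matrix.det_fromBlocks_smul_one₂₂ {K κ ι : Type*} [Field K] [Fintype κ] [DecidableEq κ]
    [Unique κ] [Fintype ι] [DecidableEq ι] (a d : K) (b c : ι → K) (hd : d ≠ 0) :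
    (fromBlocks (of fun _ _ => a) (replicateRow κ b) (replicateCol κ c) (d • 1)).det =
      d ^ Fintype.card ι * (a - (∑ i, b i * c i) / d) := by
  let _ : Invertible (d • 1 : Matrix ι ι K) :=
    ⟨d⁻¹ • 1, by simp [smul_smul, hd], by simp [smul_smul, hd]⟩
  rw [det_fromBlocks₂₂, show ⅟(d • 1 : Matrix ι ι K) = d⁻¹ • 1 from rfl, det_smul, det_one,
    mul_one, det_unique]
  simp [mul_apply, div_eq_inv_mul]

theorem List.pairwise_le_cons_replicate_append_singleton {α : Type*} [Preorder α] {lo a hi : α}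
    (m : ℕ) (hlo : lo ≤ a) (hhi : a ≤ hi) :
    (lo :: (List.replicate m a ++ [hi])).Pairwise (· ≤ ·) := by
  simp only [List.pairwise_cons, List.pairwise_append, List.pairwise_replicate, List.mem_append,
    List.mem_replicate, List.mem_singleton]
  grind [le_trans]

namespace starGraph

variable (n : ℕ) [NeZero n]

theorem adj_iff {u v : Fin n} : (starGraph n).Adj u v ↔ u ≠ v ∧ (u = 0 ∨ v = 0) := Iff.rfl

theorem degree_zero : (starGraph n).degree 0 = n - 1 := by
  have : (starGraph n).neighborFinset 0 = Finset.univ.erase 0 := by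
    ext v
    rw [SimpleGraph.mem_neighborFinset]
    simp [adj_iff, eq_comm]
  rw [← SimpleGraph.card_neighborFinset_eq_degree, this,
    Finset.card_erase_of_mem (Finset.mem_univ _), Finset.card_univ, Fintype.card_fin]

theorem degree_of_ne_zero {v : Fin n} (hv : v ≠ 0) : (starGraph n).degree v = 1 := by
  have : (starGraph n).neighborFinset v = {0} := by
    ext u
    rw [SimpleGraph.mem_neighborFinset, adj_iff, Finset.mem_singleton]
    grind
  rw [← SimpleGraph.card_neighborFinset_eq_degree, this, Finset.card_singleton]

theorem det_scalar_sub_Aalpha {α x : ℝ} (hx : x ≠ α) :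
    (scalar (Fin n) x - Aalpha α (starGraph n)).det =
      (x - α) ^ (n - 1) * (x - α * (n - 1) - (n - 1) * (1 - α) ^ 2 / (x - α)) := by
  have h1 : 1 ≤ n := NeZero.one_le
  let e := Equiv.sumCompl (· = (0 : Fin n))
  have hblocks : (scalar (Fin n) x - Aalpha α (starGraph n)).submatrix e e =
      fromBlocks (of fun _ _ => x - α * (n - 1)) (replicateRow _ fun _ => -(1 - α))
        (replicateCol _ fun _ => -(1 - α)) ((x - α) • 1) := by
    ext (⟨i, rfl⟩ | ⟨i, hi⟩) (⟨j, rfl⟩ | ⟨j, hj⟩)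
    · simp [e, Aalpha, degree_zero, Nat.cast_sub h1]
    · simp [e, Aalpha, adj_iff, Ne.symm hj]
    · simp [e, Aalpha, adj_iff, hi]
    · by_cases hij : i = j
      · subst hij
        simp [e, Aalpha, degree_of_ne_zero n hi, one_apply]
      · simp [e, Aalpha, adj_iff, hi, hj, hij, one_apply]
  rw [← det_submatrix_equiv_self e, hblocks, det_fromBlocks_smul_one₂₂ _ _ _ _ (sub_ne_zero.2 hx),
    Finset.sum_const, Finset.card_univ, Fintype.card_subtype_compl, Fintype.card_subtype_eq,
    Fintype.card_fin, nsmul_eq_mul, Nat.cast_sub h1, Nat.cast_one]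
  ring

theorem sq_le_discr (α : ℝ) :
    (α * (n - 2)) ^ 2 ≤ α ^ 2 * n ^ 2 + 4 * (n - 1) * (1 - 2 * α) := by
  have h1 : (1 : ℝ) ≤ n := by exact_mod_cast NeZero.one_le
  nlinarith [sq_nonneg (1 - α)]

theorem charpoly_Aalpha (hn : 2 ≤ n) (α : ℝ) :
    (Aalpha α (starGraph n)).charpoly = (X - C α) ^ (n - 2) *
      (X - C ((α * n + √(α ^ 2 * n ^ 2 + 4 * (n - 1) * (1 - 2 * α))) / 2)) *
      (X - C ((α * n - √(α ^ 2 * n ^ 2 + 4 * (n - 1) * (1 - 2 * α))) / 2)) := by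
  have hs := Real.sq_sqrt ((sq_nonneg _).trans (sq_le_discr n α))
  set s := √(α ^ 2 * n ^ 2 + 4 * (n - 1) * (1 - 2 * α))
  apply eq_of_infinite_eval_eq
  refine (Set.finite_singleton α).infinite_compl.mono fun x (hx : x ≠ α) => ?_
  have hxα : x - α ≠ 0 := sub_ne_zero.2 hx
  obtain ⟨m, rfl⟩ : ∃ m, n = m + 2 := ⟨n - 2, by omega⟩
  simp only [Set.mem_ofPred_eq, eval_charpoly, det_scalar_sub_Aalpha _ hx, eval_mul, eval_pow,
    eval_sub, eval_X, eval_C, Nat.add_sub_cancel, show m + 2 - 1 = m + 1 by omega] at hs ⊢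
  push_cast at hs ⊢
  field_simp
  linear_combination (x - α) ^ (m + 1) * hs

theorem eigenvalues_Aalpha (hn : 2 ≤ n) (α : ℝ) :
    Finset.univ.val.map (Aalpha_isHermitian α (starGraph n)).eigenvalues =
      ↑((α * n - √(α ^ 2 * n ^ 2 + 4 * (n - 1) * (1 - 2 * α))) / 2 :: (List.replicate (n - 2) α ++
        [(α * n + √(α ^ 2 * n ^ 2 + 4 * (n - 1) * (1 - 2 * α))) / 2])) := by
  have h := (Aalpha_isHermitian α (starGraph n)).roots_charpoly_eq_eigenvalues
  have hmonic := ((monic_X_sub_C α).pow (n - 2)).mul (monic_X_sub_C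
    ((α * n + √(α ^ 2 * n ^ 2 + 4 * (n - 1) * (1 - 2 * α))) / 2))
  rw [charpoly_Aalpha n hn, roots_mul (hmonic.mul (monic_X_sub_C _)).ne_zero,
    roots_mul hmonic.ne_zero, roots_pow, RCLike.ofReal_real_eq_id, Function.id_comp] at h
  rw [← h, roots_X_sub_C, roots_X_sub_C, roots_X_sub_C, Multiset.nsmul_singleton]
  simp only [← Multiset.cons_coe, ← Multiset.coe_add, Multiset.coe_replicate,
    ← Multiset.singleton_add, Multiset.coe_nil, add_zero]
  abel

theorem sort_eigenvalues_Aalpha (hn : 2 ≤ n) (α : ℝ) :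
    (Finset.univ.val.map (Aalpha_isHermitian α (starGraph n)).eigenvalues).sort (· ≤ ·) =
      (α * n - √(α ^ 2 * n ^ 2 + 4 * (n - 1) * (1 - 2 * α))) / 2 :: (List.replicate (n - 2) α ++
        [(α * n + √(α ^ 2 * n ^ 2 + 4 * (n - 1) * (1 - 2 * α))) / 2]) := by
  obtain ⟨hlo, hhi⟩ := abs_le.mp (Real.abs_le_sqrt (sq_le_discr n α))
  rw [eigenvalues_Aalpha n hn, Multiset.coe_sort]
  refine List.mergeSort_eq_self _ (List.pairwise_le_cons_replicate_append_singleton _ ?_ ?_) <;>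
    linarith

end starGraph

theorem Aalpha_star_spectrum (n : ℕ) [NeZero n] (hn : 2 ≤ n) (α : ℝ) :
    eigDesc (Aalpha_isHermitian α (starGraph n)) 1 =
      (α * n + Real.sqrt (α ^ 2 * n ^ 2 + 4 * (n - 1) * (1 - 2 * α))) / 2 ∧
    eigDesc (Aalpha_isHermitian α (starGraph n)) n =
      (α * n - Real.sqrt (α ^ 2 * n ^ 2 + 4 * (n - 1) * (1 - 2 * α))) / 2 ∧
    ∀ k : ℕ, 2 ≤ k → k ≤ n - 1 → eigDesc (Aalpha_isHermitian α (starGraph n)) k = α := by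
  simp only [eigDesc, starGraph.sort_eigenvalues_Aalpha n hn]
  obtain ⟨m, rfl⟩ : ∃ m, n = m + 2 := ⟨n - 2, by omega⟩
  refine ⟨by simp, by simp, fun k hk2 hkn => ?_⟩
  obtain ⟨i, hi⟩ : ∃ i, m + 2 - k = i + 1 := ⟨m + 1 - k, by omega⟩
  rw [hi, List.getD_cons_succ, List.getD_append _ _ _ _ (by simp; omega),
    List.getD_replicate _ (by omega)]
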